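/- arXiv:1412.6579 — 6 statements merged into one kernel-verified Lean document; each statement's English description precedes it below -/
import Mathlib

section
/- For any While statement s, state σ, and traces τ and τ', if (s,σ) ⇒ τ and τ ≈ τ', then (s,σ) ⇒ τ'. -/
namespace WhileTrace

/-- Program variables. -/
abbrev Var := ℕ
/-- States assign integer values to variables. -/
abbrev State := Var → ℤ
/-- Arithmetic expressions, modelled by their integer value in each state. -/
abbrev Expr := State → ℤ

/-- State update `σ[x ↦ v]`. -/
def update (σ : State) (x : Var) (v : ℤ) : State := Function.update σ x v

/-- Reading an expression as a boolean: `σ ⊨ e`. -/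
def istrue (e : Expr) (σ : State) : Prop := e σ ≠ 0

/-- Traces: nonempty, possibly infinite sequences of states
(a head state together with a possibly infinite sequence of further states). -/
def Trace : Type := State × Stream'.Seq State

/-- The singleton trace `⟨σ⟩`. -/
def Trace.single (σ : State) : Trace := (σ, Stream'.Seq.nil)

/-- The cons trace `σ :: τ`. -/
def Trace.cons (σ : State) (τ : Trace) : Trace := (σ, Stream'.Seq.cons τ.1 τ.2)

/-- The first state of a trace. -/
def Trace.hd (τ : Trace) : State := τ.1

/-- Bisimilarity of traces `τ ≈ τ'`, as a greatest fixed point: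
there is a relation `R` relating the two traces that is consistent with the
coinductive rules `⟨σ⟩ ≈ ⟨σ⟩` and `σ::τ ≈ σ::τ'` whenever `τ ≈ τ'`. -/
def Bisim (τ τ' : Trace) : Prop :=
  ∃ R : Trace → Trace → Prop, R τ τ' ∧
    ∀ a b, R a b →
      (∃ σ, a = Trace.single σ ∧ b = Trace.single σ) ∨
      (∃ σ a' b', a = Trace.cons σ a' ∧ b = Trace.cons σ b' ∧ R a' b')

/-- Finiteness `τ ↓ σ` : `τ` is finite with last state `σ` (inductive). -/
inductive Converges : Trace → State → Prop
  | single (σ : State) : Converges (Trace.single σ) σ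
  | cons (σ' : State) {τ : Trace} {σ : State} :
      Converges τ σ → Converges (Trace.cons σ' τ) σ

/-- Infiniteness of a trace (coinductive, as a greatest fixed point). -/
def InfiniteT (τ : Trace) : Prop :=
  ∃ P : Trace → Prop, P τ ∧ ∀ a, P a → ∃ σ a', a = Trace.cons σ a' ∧ P a'

/-- Statements of the While language. -/
inductive Stmt : Type
  | assign (x : Var) (e : Expr)
  | skip
  | seq (s₀ s₁ : Stmt)
  | ifte (e : Expr) (st sf : Stmt)
  | whileDo (e : Expr) (st : Stmt)

/-- A pair of relations `(E, ES)` is consistent with the rules of evaluation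
and extended evaluation: every claimed evaluation is backed by one of the
coinductive rules, with premises again in `(E, ES)`. -/
def EvalConsistent (E : Stmt → State → Trace → Prop)
    (ES : Stmt → Trace → Trace → Prop) : Prop :=
  (∀ x e σ τ, E (.assign x e) σ τ →
      τ = Trace.cons σ (Trace.single (update σ x (e σ)))) ∧
  (∀ σ τ, E .skip σ τ → τ = Trace.single σ) ∧
  (∀ s₀ s₁ σ τ', E (.seq s₀ s₁) σ τ' → ∃ τ, E s₀ σ τ ∧ ES s₁ τ τ') ∧
  (∀ e st sf σ τ, E (.ifte e st sf) σ τ →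
      (istrue e σ ∧ ES st (Trace.cons σ (Trace.single σ)) τ) ∨
      (¬ istrue e σ ∧ ES sf (Trace.cons σ (Trace.single σ)) τ)) ∧
  (∀ e st σ τ', E (.whileDo e st) σ τ' →
      (istrue e σ ∧ ∃ τ, ES st (Trace.cons σ (Trace.single σ)) τ ∧
        ES (.whileDo e st) τ τ') ∨
      (¬ istrue e σ ∧ τ' = Trace.cons σ (Trace.single σ))) ∧
  (∀ s τ τ', ES s τ τ' →
      (∃ σ, τ = Trace.single σ ∧ E s σ τ') ∨
      (∃ σ τ₀ τ₀', τ = Trace.cons σ τ₀ ∧ τ' = Trace.cons σ τ₀' ∧ ES s τ₀ τ₀'))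

/-- Evaluation `(s,σ) ⇒ τ` : greatest fixed point of the mutual coinductive rules. -/
def Exec (s : Stmt) (σ : State) (τ : Trace) : Prop :=
  ∃ E ES, EvalConsistent E ES ∧ E s σ τ

/-- Extended evaluation `(s,τ) ⇒* τ'`. -/
def ExecSeq (s : Stmt) (τ τ' : Trace) : Prop :=
  ∃ E ES, EvalConsistent E ES ∧ ES s τ τ'

/-- The standard inductive state-based big-step semantics `(s,σ) ⇓ σ'`. -/
inductive BigStep : Stmt → State → State → Prop
  | assign (x : Var) (e : Expr) (σ : State) :
      BigStep (.assign x e) σ (update σ x (e σ))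
  | skip (σ : State) : BigStep .skip σ σ
  | seq {s₀ s₁ : Stmt} {σ σ' σ'' : State} :
      BigStep s₀ σ σ' → BigStep s₁ σ' σ'' → BigStep (.seq s₀ s₁) σ σ''
  | ifTrue {e : Expr} {st sf : Stmt} {σ σ' : State} :
      istrue e σ → BigStep st σ σ' → BigStep (.ifte e st sf) σ σ'
  | ifFalse {e : Expr} {st sf : Stmt} {σ σ' : State} :
      ¬ istrue e σ → BigStep sf σ σ' → BigStep (.ifte e st sf) σ σ'
  | whileTrue {e : Expr} {st : Stmt} {σ σ' σ'' : State} :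
      istrue e σ → BigStep st σ σ' → BigStep (.whileDo e st) σ' σ'' →
      BigStep (.whileDo e st) σ σ''
  | whileFalse {e : Expr} {st : Stmt} {σ : State} :
      ¬ istrue e σ → BigStep (.whileDo e st) σ σ

/-- State predicates. -/
abbrev StatePred := State → Prop
/-- Trace predicates. -/
abbrev TracePred := Trace → Prop

/-- A setoid trace predicate respects bisimilarity. -/
def IsSetoidPred (P : TracePred) : Prop := ∀ τ τ', P τ → Bisim τ τ' → P τ'

/-- The singleton predicate `[U]`. -/
def Sglt (U : StatePred) : TracePred :=
  fun τ => ∃ σ, U σ ∧ τ = Trace.single σ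

/-- The doubleton predicate `⟨U⟩`. -/
def Dup (U : StatePred) : TracePred :=
  fun τ => ∃ σ, U σ ∧ τ = Trace.cons σ (Trace.single σ)

/-- The update predicate `U[x ↦ e]`. -/
def UpdPred (U : StatePred) (x : Var) (e : Expr) : TracePred :=
  fun τ => ∃ σ, U σ ∧ τ = Trace.cons σ (Trace.single (update σ x (e σ)))

/-- `Q follows τ in τ'` (coinductive, as a greatest fixed point). -/
def Follows (Q : TracePred) (τ τ' : Trace) : Prop :=
  ∃ R : Trace → Trace → Prop, R τ τ' ∧
    ∀ a b, R a b →
      (∃ σ, a = Trace.single σ ∧ b.hd = σ ∧ Q b) ∨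
      (∃ σ a' b', a = Trace.cons σ a' ∧ b = Trace.cons σ b' ∧ R a' b')

/-- The chop `P ** Q`. -/
def Chop (P Q : TracePred) : TracePred :=
  fun τ' => ∃ τ, P τ ∧ Follows Q τ τ'

/-- The iteration `P*` (coinductive, as a greatest fixed point). -/
def Iter (P : TracePred) : TracePred := fun τ =>
  ∃ X : TracePred, X τ ∧
    ∀ a, X a → Sglt (fun _ => True) a ∨ ∃ τ₀, P τ₀ ∧ Follows X τ₀ a

/-- `Last P` : states that are the last state of some finite trace satisfying `P`. -/
def Last (P : TracePred) : StatePred := fun σ => ∃ τ, P τ ∧ Converges τ σ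

/-- The trace predicate `finite`. -/
def FiniteT : TracePred := fun τ => ∃ σ, Converges τ σ

/-- Derivability `⊢ {U} s {P}` in the trace-based Hoare logic. -/
inductive THoare : StatePred → Stmt → TracePred → Prop
  | assign (U : StatePred) (x : Var) (e : Expr) :
      THoare U (.assign x e) (UpdPred U x e)
  | skip (U : StatePred) : THoare U .skip (Sglt U)
  | seq {U V : StatePred} {s₀ s₁ : Stmt} {P Q : TracePred} :
      THoare U s₀ (Chop P (Sglt V)) → THoare V s₁ Q →
      THoare U (.seq s₀ s₁) (Chop P Q)
  | ifte {U : StatePred} {e : Expr} {st sf : Stmt} {P : TracePred} :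
      THoare (fun σ => istrue e σ ∧ U σ) st P →
      THoare (fun σ => ¬ istrue e σ ∧ U σ) sf P →
      THoare U (.ifte e st sf) (Chop (Dup U) P)
  | whileDo {U I : StatePred} {e : Expr} {st : Stmt} {P : TracePred} :
      (∀ σ, U σ → I σ) →
      THoare (fun σ => istrue e σ ∧ I σ) st (Chop P (Sglt I)) →
      THoare U (.whileDo e st)
        (Chop (Dup U)
          (Chop (Iter (Chop P (Dup I))) (Sglt (fun σ => ¬ istrue e σ))))
  | conseq {U U' : StatePred} {s : Stmt} {P P' : TracePred} :
      (∀ σ, U σ → U' σ) → THoare U' s P' → (∀ τ, P' τ → P τ) →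
      THoare U s P
  | exist {Z : Type} {U : Z → StatePred} {s : Stmt} {P : Z → TracePred} :
      (∀ z, THoare (U z) s (P z)) →
      THoare (fun σ => ∃ z, U z σ) s (fun τ => ∃ z, P z τ)

/-- Derivability `⊢p {U} s {Z}` in the state-based partial-correctness Hoare logic. -/
inductive PHoare : StatePred → Stmt → StatePred → Prop
  | assign (Z : StatePred) (x : Var) (e : Expr) :
      PHoare (fun σ => Z (update σ x (e σ))) (.assign x e) Z
  | skip (U : StatePred) : PHoare U .skip U
  | seq {U V Z : StatePred} {s₀ s₁ : Stmt} :
      PHoare U s₀ V → PHoare V s₁ Z → PHoare U (.seq s₀ s₁) Z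
  | ifte {U Z : StatePred} {e : Expr} {st sf : Stmt} :
      PHoare (fun σ => istrue e σ ∧ U σ) st Z →
      PHoare (fun σ => ¬ istrue e σ ∧ U σ) sf Z →
      PHoare U (.ifte e st sf) Z
  | whileDo {I : StatePred} {e : Expr} {st : Stmt} :
      PHoare (fun σ => istrue e σ ∧ I σ) st I →
      PHoare I (.whileDo e st) (fun σ => I σ ∧ ¬ istrue e σ)
  | exist {Z : Type} {U V : Z → StatePred} {s : Stmt} :
      (∀ z, PHoare (U z) s (V z)) →
      PHoare (fun σ => ∃ z, U z σ) s (fun σ => ∃ z, V z σ)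
  | conseq {U U' Z Z' : StatePred} {s : Stmt} :
      (∀ σ, U σ → U' σ) → PHoare U' s Z' → (∀ σ, Z' σ → Z σ) →
      PHoare U s Z

/-- Derivability `⊢t {U} s {Z}` in the state-based total-correctness Hoare
logic, with the `while-fun` rule. -/
inductive TotHoare : StatePred → Stmt → StatePred → Prop
  | assign (Z : StatePred) (x : Var) (e : Expr) :
      TotHoare (fun σ => Z (update σ x (e σ))) (.assign x e) Z
  | skip (U : StatePred) : TotHoare U .skip U
  | seq {U V Z : StatePred} {s₀ s₁ : Stmt} :
      TotHoare U s₀ V → TotHoare V s₁ Z → TotHoare U (.seq s₀ s₁) Z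
  | ifte {U Z : StatePred} {e : Expr} {st sf : Stmt} :
      TotHoare (fun σ => istrue e σ ∧ U σ) st Z →
      TotHoare (fun σ => ¬ istrue e σ ∧ U σ) sf Z →
      TotHoare U (.ifte e st sf) Z
  | whileFun {I : StatePred} {e : Expr} {st : Stmt} (t : State → ℕ) (m : ℕ) :
      (∀ n : ℕ, TotHoare (fun σ => istrue e σ ∧ I σ ∧ t σ = n) st
        (fun σ => I σ ∧ t σ < n)) →
      TotHoare (fun σ => I σ ∧ t σ = m) (.whileDo e st)
        (fun σ => I σ ∧ t σ ≤ m ∧ ¬ istrue e σ)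
  | exist {Z : Type} {U V : Z → StatePred} {s : Stmt} :
      (∀ z, TotHoare (U z) s (V z)) →
      TotHoare (fun σ => ∃ z, U z σ) s (fun σ => ∃ z, V z σ)
  | conseq {U U' Z Z' : StatePred} {s : Stmt} :
      (∀ σ, U σ → U' σ) → TotHoare U' s Z' → (∀ σ, Z' σ → Z σ) →
      TotHoare U s Z

/-! Traces are encoded as `State × Stream'.Seq State`, and sequences are equal as soon as they are
related by a bisimulation (`Stream'.Seq.eq_of_bisim'`), so bisimilar traces are equal and the
evaluation relation respects bisimilarity trivially. -/

theorem Bisim.eq {τ τ' : Trace} (hb : Bisim τ τ') : τ = τ' := by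
  obtain ⟨R, hR, hstep⟩ := hb
  have hd_eq : ∀ a b, R a b → a.hd = b.hd := by
    intro a b hab
    rcases hstep a b hab with ⟨σ, rfl, rfl⟩ | ⟨σ, a', b', rfl, rfl, -⟩ <;> rfl
  refine Prod.ext (hd_eq τ τ' hR) <|
    Stream'.Seq.eq_of_bisim' (fun s t => ∃ a b, R a b ∧ a.2 = s ∧ b.2 = t)
      ⟨τ, τ', hR, rfl, rfl⟩ ?_
  rintro _ _ ⟨a, b, hab, rfl, rfl⟩
  rcases hstep a b hab with ⟨σ, rfl, rfl⟩ | ⟨σ, a', b', rfl, rfl, hab'⟩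
  · exact Or.inl ⟨rfl, rfl⟩
  · refine Or.inr ⟨a'.hd, a'.2, b'.2, rfl, ?_, a', b', hab', rfl, rfl⟩
    rw [hd_eq a' b' hab']
    rfl

/-- If `(s,σ) ⇒ τ` and `τ ≈ τ'`, then `(s,σ) ⇒ τ'`. -/
theorem exec_bisim (s : Stmt) (σ : State) (τ τ' : Trace)
    (h : Exec s σ τ) (hb : Bisim τ τ') : Exec s σ τ' := hb.eq ▸ h

end WhileTrace
end

section
/- Evaluation is deterministic up to bisimilarity: for any While statement s, state σ, and traces τ and τ', if (s,σ) ⇒ τ and (s,σ) ⇒ τ', then τ ≈ τ'. -/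
namespace WhileTrace

namespace Trace

lemma single_ne_cons (σ σ' : State) (τ : Trace) : single σ ≠ cons σ' τ := fun h =>
  Stream'.Seq.nil_ne_cons (congrArg Prod.snd h)

lemma single_injective : Function.Injective single := fun _ _ h =>
  congrArg Prod.fst h

lemma cons_injective2 : Function.Injective2 cons := by
  intro σ σ' τ τ' h
  obtain ⟨hσ, hs⟩ := Prod.ext_iff.mp h
  obtain ⟨hτ₁, hτ₂⟩ := Stream'.Seq.cons_injective2 hs
  exact ⟨hσ, Prod.ext hτ₁ hτ₂⟩

end Trace

open Trace

section Inversion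

variable {s s₀ s₁ st sf : Stmt} {x : Var} {e : Expr} {σ : State} {t a : Trace}

lemma Exec.assign_inv (h : Exec (.assign x e) σ a) :
    a = cons σ (single (update σ x (e σ))) := by
  obtain ⟨E, ES, hC, hE⟩ := h
  exact hC.1 x e σ a hE

lemma Exec.skip_inv (h : Exec .skip σ a) : a = single σ := by
  obtain ⟨E, ES, hC, hE⟩ := h
  exact hC.2.1 σ a hE

lemma Exec.seq_inv (h : Exec (.seq s₀ s₁) σ a) : ∃ t, Exec s₀ σ t ∧ ExecSeq s₁ t a := by
  obtain ⟨E, ES, hC, hE⟩ := h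
  obtain ⟨t, h₀, h₁⟩ := hC.2.2.1 s₀ s₁ σ a hE
  exact ⟨t, ⟨E, ES, hC, h₀⟩, ⟨E, ES, hC, h₁⟩⟩

lemma Exec.ifte_inv (h : Exec (.ifte e st sf) σ a) :
    (istrue e σ ∧ ExecSeq st (cons σ (single σ)) a) ∨
    (¬ istrue e σ ∧ ExecSeq sf (cons σ (single σ)) a) := by
  obtain ⟨E, ES, hC, hE⟩ := h
  exact (hC.2.2.2.1 e st sf σ a hE).imp (And.imp_right (⟨E, ES, hC, ·⟩))
    (And.imp_right (⟨E, ES, hC, ·⟩))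

lemma Exec.whileDo_inv (h : Exec (.whileDo e st) σ a) :
    (istrue e σ ∧ ∃ t, ExecSeq st (cons σ (single σ)) t ∧ ExecSeq (.whileDo e st) t a) ∨
    (¬ istrue e σ ∧ a = cons σ (single σ)) := by
  obtain ⟨E, ES, hC, hE⟩ := h
  rcases hC.2.2.2.2.1 e st σ a hE with ⟨he, t, hbody, hloop⟩ | hfalse
  · exact .inl ⟨he, t, ⟨E, ES, hC, hbody⟩, ⟨E, ES, hC, hloop⟩⟩
  · exact .inr hfalse

lemma ExecSeq.single_inv (h : ExecSeq s (single σ) a) : Exec s σ a := by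
  obtain ⟨E, ES, hC, hES⟩ := h
  rcases hC.2.2.2.2.2 s _ a hES with ⟨σ', hσ, hE⟩ | ⟨σ', t₀, a₀, hcons, -⟩
  · cases single_injective hσ
    exact ⟨E, ES, hC, hE⟩
  · exact absurd hcons (single_ne_cons _ _ _)

lemma ExecSeq.cons_inv (h : ExecSeq s (cons σ t) a) :
    ∃ a₀, a = cons σ a₀ ∧ ExecSeq s t a₀ := by
  obtain ⟨E, ES, hC, hES⟩ := h
  rcases hC.2.2.2.2.2 s _ a hES with ⟨σ', hsingle, -⟩ | ⟨σ', t₀, a₀, hcons, rfl, h₀⟩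
  · exact absurd hsingle.symm (single_ne_cons _ _ _)
  · obtain ⟨rfl, rfl⟩ := cons_injective2 hcons
    exact ⟨a₀, rfl, ⟨E, ES, hC, h₀⟩⟩

end Inversion

def BisimStep (R : Trace → Trace → Prop) (a b : Trace) : Prop :=
  (∃ σ, a = single σ ∧ b = single σ) ∨
  (∃ σ a' b', a = cons σ a' ∧ b = cons σ b' ∧ R a' b')

/-- Bisimulation up to extended evaluation: the closure under `execSeq` is needed because the
second half of `s₀; s₁` runs from traces that are only related, not equal. -/
inductive ExecRel : Trace → Trace → Prop
  | single (σ : State) : ExecRel (single σ) (single σ)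
  | exec {s : Stmt} {σ : State} {a b : Trace} : Exec s σ a → Exec s σ b → ExecRel a b
  | execSeq {s : Stmt} {t t' a b : Trace} :
      ExecRel t t' → ExecSeq s t a → ExecSeq s t' b → ExecRel a b

lemma BisimStep.cons_single (σ σ' : State) :
    BisimStep ExecRel (cons σ (single σ')) (cons σ (single σ')) :=
  .inr ⟨σ, _, _, rfl, rfl, .single σ'⟩

lemma BisimStep.rel_of_cons {R : Trace → Trace → Prop} {σ σ' : State} {t t' : Trace}
    (h : BisimStep R (cons σ t) (cons σ' t')) : R t t' := by
  rcases h with ⟨_, hsingle, -⟩ | ⟨_, _, _, h, h', hR⟩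
  · exact absurd hsingle.symm (single_ne_cons _ _ _)
  · rwa [(cons_injective2 h).2, (cons_injective2 h').2]

lemma bisimStep_execSeq_cons {s : Stmt} {σ : State} {t t' a b : Trace} (h : ExecRel t t')
    (ha : ExecSeq s (cons σ t) a) (hb : ExecSeq s (cons σ t') b) : BisimStep ExecRel a b := by
  obtain ⟨a₀, rfl, ha₀⟩ := ha.cons_inv
  obtain ⟨b₀, rfl, hb₀⟩ := hb.cons_inv
  exact .inr ⟨σ, a₀, b₀, rfl, rfl, .execSeq h ha₀ hb₀⟩

lemma bisimStep_execSeq {s : Stmt} {t t' a b : Trace}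
    (hs : ∀ σ a b, Exec s σ a → Exec s σ b → BisimStep ExecRel a b)
    (h : BisimStep ExecRel t t') (ha : ExecSeq s t a) (hb : ExecSeq s t' b) :
    BisimStep ExecRel a b := by
  rcases h with ⟨σ, rfl, rfl⟩ | ⟨σ, t₀, t₀', rfl, rfl, h₀⟩
  · exact hs σ a b ha.single_inv hb.single_inv
  · exact bisimStep_execSeq_cons h₀ ha hb

lemma bisimStep_exec (s : Stmt) :
    ∀ σ a b, Exec s σ a → Exec s σ b → BisimStep ExecRel a b := by
  induction s with
  | assign x e =>
    intro σ a b ha hb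
    rw [ha.assign_inv, hb.assign_inv]
    exact .cons_single _ _
  | skip =>
    intro σ a b ha hb
    rw [ha.skip_inv, hb.skip_inv]
    exact .inl ⟨σ, rfl, rfl⟩
  | seq s₀ s₁ ih₀ ih₁ =>
    intro σ a b ha hb
    obtain ⟨t, ha₀, ha₁⟩ := ha.seq_inv
    obtain ⟨t', hb₀, hb₁⟩ := hb.seq_inv
    exact bisimStep_execSeq ih₁ (ih₀ σ t t' ha₀ hb₀) ha₁ hb₁
  | ifte e st sf ihst ihsf =>
    intro σ a b ha hb
    rcases ha.ifte_inv with ⟨he, ha⟩ | ⟨he, ha⟩ <;>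
      rcases hb.ifte_inv with ⟨he', hb⟩ | ⟨he', hb⟩
    · exact bisimStep_execSeq ihst (.cons_single σ σ) ha hb
    · exact absurd he he'
    · exact absurd he' he
    · exact bisimStep_execSeq ihsf (.cons_single σ σ) ha hb
  | whileDo e st ih =>
    intro σ a b ha hb
    rcases ha.whileDo_inv with ⟨he, t, ha₀, ha₁⟩ | ⟨he, rfl⟩ <;>
      rcases hb.whileDo_inv with ⟨he', t', hb₀, hb₁⟩ | ⟨he', rfl⟩
    · -- no hypothesis on the loop itself is needed: both runs of the body start with `σ`, so the
      -- recursive runs of the loop start from the related tails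
      have hbody := bisimStep_execSeq ih (.cons_single σ σ) ha₀ hb₀
      obtain ⟨t₀, rfl, -⟩ := ha₀.cons_inv
      obtain ⟨t₀', rfl, -⟩ := hb₀.cons_inv
      exact bisimStep_execSeq_cons hbody.rel_of_cons ha₁ hb₁
    · exact absurd he he'
    · exact absurd he' he
    · exact .cons_single σ σ

lemma ExecRel.bisimStep {a b : Trace} (h : ExecRel a b) : BisimStep ExecRel a b := by
  induction h with
  | single σ => exact .inl ⟨σ, rfl, rfl⟩
  | exec ha hb => exact bisimStep_exec _ _ _ _ ha hb
  | execSeq _ ha hb ih => exact bisimStep_execSeq (bisimStep_exec _) ih ha hb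

/-- Evaluation is deterministic up to bisimilarity. -/
theorem exec_deterministic (s : Stmt) (σ : State) (τ τ' : Trace)
    (h : Exec s σ τ) (h' : Exec s σ τ') : Bisim τ τ' :=
  ⟨ExecRel, .exec h h', fun _ _ hab => hab.bisimStep⟩

end WhileTrace
end

section
/- Evaluation is total: for any While statement s and state σ, there exists a trace τ such that (s,σ) ⇒ τ. -/
namespace WhileTrace

/-! The trace of `(s, σ)` is produced corecursively by a small-step interpreter whose
configurations are a stack of pending statements and the current state; `skip` and `;` are
silent, every other step emits the new state. Since evaluation is a greatest fixed point, it
suffices to exhibit relations consistent with its rules: `τ` is the run of `[s]` from `σ`, and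
`τ'` is `τ` with `s` pushed to the bottom of the stack. -/

abbrev Config := List Stmt × State

instance (e : Expr) (σ : State) : Decidable (istrue e σ) :=
  inferInstanceAs (Decidable (e σ ≠ 0))

def step : Config → Option Config
  | ([], _) => none
  | (.skip :: k, σ) => step (k, σ)
  | (.assign x e :: k, σ) => some (k, update σ x (e σ))
  | (.seq s₀ s₁ :: k, σ) => step (s₀ :: s₁ :: k, σ)
  | (.ifte e st sf :: k, σ) => some ((if istrue e σ then st else sf) :: k, σ)
  | (.whileDo e st :: k, σ) => some (if istrue e σ then st :: .whileDo e st :: k else k, σ)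
  termination_by c => (c.1.map sizeOf).sum

theorem step_append (c : Config) (k' : List Stmt) :
    step (c.1 ++ k', c.2) = (step c).elim (step (k', c.2)) fun c => some (c.1 ++ k', c.2) := by
  fun_induction step c with
  | case1 σ => rfl
  | case2 k σ ih | case4 s₀ s₁ k σ ih => simpa [step] using ih
  | case3 | case5 => simp [step]
  | case6 e st k σ => by_cases h : istrue e σ <;> simp [step, h]

def run (c : Config) : Trace :=
  (c.2, Stream'.Seq.corec (fun c => (step c).map fun c' => (c'.2, c')) c)

theorem run_of_step_eq_none {c : Config} (h : step c = none) : run c = Trace.single c.2 := by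
  rw [run, Stream'.Seq.corec_nil _ _ (by rw [h]; rfl)]; rfl

theorem run_of_step_eq_some {c c' : Config} (h : step c = some c') :
    run c = Trace.cons c.2 (run c') := by
  rw [run, Stream'.Seq.corec_cons (by rw [h]; rfl)]; rfl

theorem run_congr {c₁ c₂ : Config} (h₂ : c₁.2 = c₂.2) (h : step c₁ = step c₂) :
    run c₁ = run c₂ := by
  rcases hc : step c₂ with - | c'
  · rw [run_of_step_eq_none (h.trans hc), run_of_step_eq_none hc, h₂]
  · rw [run_of_step_eq_some (h.trans hc), run_of_step_eq_some hc, h₂]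

theorem run_nil (σ : State) : run ([], σ) = Trace.single σ :=
  run_of_step_eq_none (by rw [step])

theorem run_assign (x : Var) (e : Expr) (k : List Stmt) (σ : State) :
    run (.assign x e :: k, σ) = Trace.cons σ (run (k, update σ x (e σ))) :=
  run_of_step_eq_some (by rw [step])

theorem run_skip (k : List Stmt) (σ : State) : run (.skip :: k, σ) = run (k, σ) :=
  run_congr rfl (by rw [step])

theorem run_seq (s₀ s₁ : Stmt) (k : List Stmt) (σ : State) :
    run (.seq s₀ s₁ :: k, σ) = run (s₀ :: s₁ :: k, σ) :=
  run_congr rfl (by rw [step])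

theorem run_ifte (e : Expr) (st sf : Stmt) (k : List Stmt) (σ : State) :
    run (.ifte e st sf :: k, σ) = Trace.cons σ (run ((if istrue e σ then st else sf) :: k, σ)) :=
  run_of_step_eq_some (by rw [step])

theorem run_whileDo (e : Expr) (st : Stmt) (k : List Stmt) (σ : State) :
    run (.whileDo e st :: k, σ) =
      Trace.cons σ (run (if istrue e σ then st :: .whileDo e st :: k else k, σ)) :=
  run_of_step_eq_some (by rw [step])

def EvalByRun (s : Stmt) (σ : State) (τ : Trace) : Prop := τ = run ([s], σ)

/-- The common prefix `ps` absorbs the state `σ :: ⟨σ⟩` from which the `if` and `while` rules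
start extended evaluation. -/
def EvalSeqByRun (s : Stmt) (τ τ' : Trace) : Prop :=
  ∃ (ps : List State) (k : List Stmt) (σ : State),
    τ = ps.foldr Trace.cons (run (k, σ)) ∧ τ' = ps.foldr Trace.cons (run (k ++ [s], σ))

theorem evalSeqByRun_run (s : Stmt) (k : List Stmt) (σ : State) :
    EvalSeqByRun s (run (k, σ)) (run (k ++ [s], σ)) :=
  ⟨[], k, σ, rfl, rfl⟩

theorem evalSeqByRun_dup (s : Stmt) (σ : State) :
    EvalSeqByRun s (Trace.cons σ (Trace.single σ)) (Trace.cons σ (run ([s], σ))) :=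
  ⟨[σ], [], σ, by rw [List.foldr_cons, List.foldr_nil, run_nil], rfl⟩

theorem evalSeqByRun_cases {s : Stmt} {τ τ' : Trace} (h : EvalSeqByRun s τ τ') :
    (∃ σ, τ = Trace.single σ ∧ EvalByRun s σ τ') ∨
      (∃ σ τ₀ τ₀', τ = Trace.cons σ τ₀ ∧ τ' = Trace.cons σ τ₀' ∧ EvalSeqByRun s τ₀ τ₀') := by
  obtain ⟨ps, k, σ, rfl, rfl⟩ := h
  rcases ps with - | ⟨σ₀, ps⟩
  · have hstep := step_append (k, σ) [s]
    rcases hk : step (k, σ) with - | c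
    · rw [hk] at hstep
      exact .inl ⟨σ, run_of_step_eq_none hk, run_congr rfl hstep⟩
    · rw [hk] at hstep
      exact .inr ⟨σ, run c, run (c.1 ++ [s], c.2), run_of_step_eq_some hk,
        run_of_step_eq_some hstep, evalSeqByRun_run s c.1 c.2⟩
  · exact .inr ⟨σ₀, _, _, rfl, rfl, ps, k, σ, rfl, rfl⟩

theorem evalConsistent_byRun : EvalConsistent EvalByRun EvalSeqByRun := by
  refine ⟨?assign, ?skip, ?seq, ?ifte, ?whileDo, fun _ _ _ => evalSeqByRun_cases⟩
  case assign =>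
    rintro x e σ τ rfl
    rw [run_assign, run_nil]
  case skip =>
    rintro σ τ rfl
    rw [run_skip, run_nil]
  case seq =>
    rintro s₀ s₁ σ τ' rfl
    exact ⟨_, rfl, run_seq s₀ s₁ [] σ ▸ evalSeqByRun_run s₁ [s₀] σ⟩
  case ifte =>
    rintro e st sf σ τ rfl
    by_cases h : istrue e σ
    · exact .inl ⟨h, by rw [run_ifte, if_pos h]; exact evalSeqByRun_dup st σ⟩
    · exact .inr ⟨h, by rw [run_ifte, if_neg h]; exact evalSeqByRun_dup sf σ⟩
  case whileDo =>
    rintro e st σ τ' rfl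
    by_cases h : istrue e σ
    · refine .inl ⟨h, _, evalSeqByRun_dup st σ, ?_⟩
      rw [run_whileDo, if_pos h]
      exact ⟨[σ], [st], σ, rfl, rfl⟩
    · exact .inr ⟨h, by rw [run_whileDo, if_neg h, run_nil]⟩

/-- Evaluation is total. -/
theorem exec_total (s : Stmt) (σ : State) : ∃ τ : Trace, Exec s σ τ :=
  ⟨run ([s], σ), EvalByRun, EvalSeqByRun, evalConsistent_byRun, rfl⟩

end WhileTrace
end

section
/- For any state predicate U and traces τ and τ', if [U] follows τ in τ', then τ ≈ τ'. -/
namespace WhileTrace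

theorem sglt_eq_single_hd {U : StatePred} {τ : Trace} (h : Sglt U τ) :
    τ = Trace.single τ.hd := by
  obtain ⟨σ, -, rfl⟩ := h
  rfl

/-- The relation witnessing `Follows Q τ τ'` is itself a bisimulation: where `τ` ends, `τ'` is
a singleton with the same state. -/
theorem Follows.bisim {Q : TracePred} (hQ : ∀ τ, Q τ → τ = Trace.single τ.hd) {τ τ' : Trace}
    (h : Follows Q τ τ') : Bisim τ τ' := by
  obtain ⟨R, hR, hstep⟩ := h
  refine ⟨R, hR, fun a b hab => ?_⟩
  rcases hstep a b hab with ⟨σ, ha, hhd, hQb⟩ | hcons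
  · exact Or.inl ⟨σ, ha, hhd ▸ hQ b hQb⟩
  · exact Or.inr hcons

/-- If `[U]` follows `τ` in `τ'`, then `τ ≈ τ'`. -/
theorem follows_sglt_bisim (U : StatePred) (τ τ' : Trace)
    (h : Follows (Sglt U) τ τ') : Bisim τ τ' :=
  h.bisim fun _ => sglt_eq_single_hd

end WhileTrace
end

section
/- A trace is infinite if and only if it satisfies True chopped with the singleton of the false state predicate: infinite ⇔ True ** [False]. -/
namespace WhileTrace

theorem not_sglt_false (τ : Trace) : ¬ Sglt (fun _ => False) τ := by
  rintro ⟨_, h, -⟩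
  exact h

/-- Along an infinite trace the singleton clause of `Follows` is never reached,
so `Q` is never consulted. -/
theorem follows_self_of_infiniteT (Q : TracePred) {τ : Trace} (h : InfiniteT τ) :
    Follows Q τ τ := by
  obtain ⟨P, hτ, hstep⟩ := h
  refine ⟨fun a b => a = b ∧ P b, ⟨rfl, hτ⟩, ?_⟩
  rintro a b ⟨rfl, hPa⟩
  obtain ⟨σ, a', rfl, hPa'⟩ := hstep a hPa
  exact Or.inr ⟨σ, a', a', rfl, rfl, rfl, hPa'⟩

/-- Since `Q` never holds, the witness `R` only relates cons traces, so its image is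
a witness of infiniteness. -/
theorem infiniteT_of_follows {Q : TracePred} (hQ : ∀ τ, ¬ Q τ) {τ τ' : Trace}
    (h : Follows Q τ τ') : InfiniteT τ' := by
  obtain ⟨R, hR, hstep⟩ := h
  refine ⟨fun b => ∃ a, R a b, ⟨τ, hR⟩, ?_⟩
  rintro b ⟨a, hab⟩
  rcases hstep a b hab with ⟨_, -, -, hQb⟩ | ⟨σ, a', b', -, rfl, hR'⟩
  · exact absurd hQb (hQ b)
  · exact ⟨σ, b', rfl, a', hR'⟩

/-- `infinite ⇔ True ** [False]`. -/
theorem infinite_iff_chop_false :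
    ∀ τ : Trace, InfiniteT τ ↔ Chop (fun _ => True) (Sglt (fun _ => False)) τ := by
  intro τ
  constructor
  · exact fun h => ⟨τ, trivial, follows_self_of_infiniteT _ h⟩
  · rintro ⟨_, -, h⟩
    exact infiniteT_of_follows not_sglt_false h

end WhileTrace
end

section
/- For any state predicate U, While statement s and setoid trace predicate P, if ⊢{U} s {P} is derivable in the trace-based Hoare logic, then so is ⊢{U} s {[U] ** P}. -/
namespace WhileTrace

/- A derivation of `{U} s {P}` is strengthened, rule by rule, to one of
`{U ∧ W} s {P ∧ W ∘ hd}` for any state predicate `W`: each axiom's postcondition pins its first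
state to one satisfying the precondition, and a chop starts with the head of its left operand.
With `W := U`, every trace `τ` with `P τ` starts in a `U`-state, so it satisfies `[U] ** P`
through the singleton `⟨hd τ⟩`. -/

theorem Follows.hd_eq {Q : TracePred} {τ τ' : Trace} (h : Follows Q τ τ') : τ'.hd = τ.hd := by
  obtain ⟨R, hR, hstep⟩ := h
  rcases hstep _ _ hR with ⟨σ, rfl, hb, -⟩ | ⟨σ, a', b', rfl, rfl, -⟩
  · exact hb
  · rfl

theorem follows_single_hd {Q : TracePred} {τ : Trace} (hQ : Q τ) :
    Follows Q (Trace.single τ.hd) τ := by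
  refine ⟨fun a b => a = Trace.single τ.hd ∧ b = τ, ⟨rfl, rfl⟩, ?_⟩
  rintro _ _ ⟨rfl, rfl⟩
  exact Or.inl ⟨_, rfl, rfl, hQ⟩

theorem chop_sglt_of_hd {U : StatePred} {P : TracePred} {τ : Trace} (hP : P τ) (hU : U τ.hd) :
    Chop (Sglt U) P τ :=
  ⟨Trace.single τ.hd, ⟨τ.hd, hU, rfl⟩, follows_single_hd hP⟩

theorem Chop.mono_left {P P' Q : TracePred} (h : ∀ τ, P τ → P' τ) {τ : Trace}
    (hτ : Chop P Q τ) : Chop P' Q τ :=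
  let ⟨τ₀, hP, hF⟩ := hτ
  ⟨τ₀, h τ₀ hP, hF⟩

theorem chop_and_hd_iff {P Q : TracePred} {W : StatePred} {τ : Trace} :
    Chop P Q τ ∧ W τ.hd ↔ Chop (fun τ₀ => P τ₀ ∧ W τ₀.hd) Q τ := by
  constructor
  · rintro ⟨⟨τ₀, hP, hF⟩, hW⟩
    exact ⟨τ₀, ⟨hP, hF.hd_eq ▸ hW⟩, hF⟩
  · rintro ⟨τ₀, ⟨hP, hW⟩, hF⟩
    exact ⟨⟨τ₀, hP, hF⟩, hF.hd_eq ▸ hW⟩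

theorem sglt_and {U W : StatePred} {τ : Trace} (h : Sglt (fun σ => U σ ∧ W σ) τ) :
    Sglt U τ ∧ W τ.hd := by
  obtain ⟨σ, ⟨hU, hW⟩, rfl⟩ := h
  exact ⟨⟨σ, hU, rfl⟩, hW⟩

theorem dup_and {U W : StatePred} {τ : Trace} (h : Dup (fun σ => U σ ∧ W σ) τ) :
    Dup U τ ∧ W τ.hd := by
  obtain ⟨σ, ⟨hU, hW⟩, rfl⟩ := h
  exact ⟨⟨σ, hU, rfl⟩, hW⟩

theorem updPred_and {U W : StatePred} {x : Var} {e : Expr} {τ : Trace}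
    (h : UpdPred (fun σ => U σ ∧ W σ) x e τ) : UpdPred U x e τ ∧ W τ.hd := by
  obtain ⟨σ, ⟨hU, hW⟩, rfl⟩ := h
  exact ⟨⟨σ, hU, rfl⟩, hW⟩

theorem chop_dup_and {U W : StatePred} {Q : TracePred} {τ : Trace}
    (h : Chop (Dup (fun σ => U σ ∧ W σ)) Q τ) : Chop (Dup U) Q τ ∧ W τ.hd :=
  chop_and_hd_iff.mpr (h.mono_left fun _ => dup_and)

theorem THoare.and_hd (W : StatePred) {U : StatePred} {s : Stmt} {P : TracePred}
    (h : THoare U s P) : THoare (fun σ => U σ ∧ W σ) s (fun τ => P τ ∧ W τ.hd) := by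
  induction h with
  | assign U x e => exact .conseq (fun _ => id) (.assign _ x e) fun _ => updPred_and
  | skip U => exact .conseq (fun _ => id) (.skip _) fun _ => sglt_and
  | seq _ h₁ ih₀ _ =>
    exact .conseq (fun _ => id) (.seq (.conseq (fun _ => id) ih₀ fun _ => chop_and_hd_iff.mp) h₁)
      fun _ => chop_and_hd_iff.mpr
  | ifte ht hf _ _ =>
    exact .conseq (fun _ => id)
      (.ifte (.conseq (fun _ h => ⟨h.1, h.2.1⟩) ht fun _ => id)
        (.conseq (fun _ h => ⟨h.1, h.2.1⟩) hf fun _ => id))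
      fun _ => chop_dup_and
  | whileDo hUI hbody _ =>
    exact .conseq (fun _ => id) (.whileDo (fun σ h => hUI σ h.1) hbody) fun _ => chop_dup_and
  | conseq hUU' _ hP'P ih =>
    exact .conseq (fun σ h => ⟨hUU' σ h.1, h.2⟩) ih fun τ h => ⟨hP'P τ h.1, h.2⟩
  | exist _ ih =>
    exact .conseq (fun _ ⟨⟨z, hU⟩, hW⟩ => ⟨z, hU, hW⟩) (.exist ih)
      fun _ ⟨z, hP, hW⟩ => ⟨⟨z, hP⟩, hW⟩

theorem tHoare_hd_general (U : StatePred) (s : Stmt) (P : TracePred)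
    (h : THoare U s P) : THoare U s (Chop (Sglt U) P) :=
  .conseq (fun _ hU => ⟨hU, hU⟩) (h.and_hd U) fun _ ⟨hP, hU⟩ => chop_sglt_of_hd hP hU

/-- If `⊢{U} s {P}` then `⊢{U} s {[U] ** P}`. -/
theorem tHoare_hd (U : StatePred) (s : Stmt) (P : TracePred)
    (hP : IsSetoidPred P) (h : THoare U s P) : THoare U s (Chop (Sglt U) P) :=
  tHoare_hd_general U s P h

end WhileTrace
end
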